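/- arXiv:2201.12772 — 6 statements merged into one kernel-verified Lean document; each statement's English description precedes it below -/
import Mathlib

section
/- Let p be a complex polynomial of degree at most d such that p(z) ≠ 0 for all z in the open unit disc 𝔻, and let b ∈ (0,1). Then for any complex number c₀ with exp(c₀) = p(0), there exists a holomorphic function g on the disc 𝔻_b = {z ∈ ℂ : |z| < b} such that exp(g(z)) = p(z) for all z ∈ 𝔻_b, g(0) = c₀, and |g(z)| ≤ d·ln(1/(1−b)) + |c₀| for all z ∈ 𝔻_b. (In the paper's terminology: p is M-zero-free on 𝔻_b with M = d·ln(1/(1−b)) + |log p(0)|.) -/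
/-!
Since `p` has no zeros in the unit disc, every root `r` satisfies `1 ≤ ‖r‖`, and
`p z = p 0 * ∏ (1 - z / r)` over the roots. On `‖z‖ < b` each factor is `1 - w` with
`‖w‖ < b`, so its principal logarithm is holomorphic there and, by comparing the series
`-log (1 - w) = ∑ wⁿ / n` with the real one, has norm at most `log (1 / (1 - b))`.
Hence `g = c₀ + ∑ log (1 - z / r)` works, and there are at most `d` roots.
-/

open Metric Polynomial

namespace Complex

lemma norm_log_one_sub_le_neg_log_one_sub_norm {w : ℂ} (hw : ‖w‖ < 1) :
    ‖log (1 - w)‖ ≤ -Real.log (1 - ‖w‖) := by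
  have hreal : HasSum (fun n : ℕ => ‖w‖ ^ n / n) (-Real.log (1 - ‖w‖)) := by
    have h := Real.hasSum_pow_div_log_of_abs_lt_one (x := ‖w‖) (by rwa [abs_norm])
    simpa using (hasSum_nat_add_iff (f := fun n : ℕ => ‖w‖ ^ n / n) 1).mp (by simpa using h)
  simpa using (hasSum_taylorSeries_neg_log hw).norm_le_of_bounded hreal fun n => by
    rw [norm_div, norm_pow, norm_natCast]

lemma norm_log_one_sub_le_log_one_div_one_sub {w : ℂ} {b : ℝ} (hw : ‖w‖ ≤ b)
    (hb : b < 1) : ‖log (1 - w)‖ ≤ Real.log (1 / (1 - b)) := by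
  calc ‖log (1 - w)‖ ≤ -Real.log (1 - ‖w‖) :=
        norm_log_one_sub_le_neg_log_one_sub_norm (hw.trans_lt hb)
    _ ≤ -Real.log (1 - b) := by gcongr
    _ = Real.log (1 / (1 - b)) := by rw [one_div, Real.log_inv]

end Complex

lemma Polynomial.eval_eq_eval_zero_mul_prod_roots {K : Type*} [Field K] {p : K[X]}
    (hroots : Multiset.card p.roots = p.natDegree) (h0 : p.eval 0 ≠ 0) (z : K) :
    p.eval z = p.eval 0 * (p.roots.map fun r => 1 - z / r).prod := by
  have hfactor : ∀ x, p.eval x = p.leadingCoeff * (p.roots.map fun r => x - r).prod := by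
    intro x
    conv_lhs => rw [← C_leadingCoeff_mul_prod_multiset_X_sub_C hroots]
    simp [eval_multiset_prod, Multiset.map_map]
  rw [hfactor z, hfactor 0, mul_assoc, ← Multiset.prod_map_mul]
  congr 2
  refine Multiset.map_congr rfl fun r hr => ?_
  have hr0 : r ≠ 0 := by rintro rfl; exact h0 (isRoot_of_mem_roots hr)
  field_simp
  ring

open Complex

noncomputable def sumLogOneSubDiv (s : Multiset ℂ) (z : ℂ) : ℂ :=
  (s.map fun r => log (1 - z / r)).sum

section SumLogOneSubDiv

variable {s : Multiset ℂ}

lemma norm_div_le_of_one_le_norm {z r : ℂ} (hr : 1 ≤ ‖r‖) : ‖z / r‖ ≤ ‖z‖ := by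
  rw [norm_div]
  exact div_le_self (norm_nonneg z) hr

@[simp]
lemma sumLogOneSubDiv_zero_right (s : Multiset ℂ) : sumLogOneSubDiv s 0 = 0 := by
  simp [sumLogOneSubDiv]

lemma one_sub_div_mem_slitPlane {z r : ℂ} (hr : 1 ≤ ‖r‖) (hz : z ∈ ball 0 1) :
    1 - z / r ∈ slitPlane := by
  have hw : ‖-(z / r)‖ < 1 := by
    rw [norm_neg]; exact (norm_div_le_of_one_le_norm hr).trans_lt (mem_ball_zero_iff.mp hz)
  simpa [sub_eq_add_neg] using mem_slitPlane_of_norm_lt_one hw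

lemma differentiableOn_log_one_sub_div {r : ℂ} (hr : 1 ≤ ‖r‖) :
    DifferentiableOn ℂ (fun z => log (1 - z / r)) (ball 0 1) := by
  intro z hz
  have hdiff : DifferentiableAt ℂ (fun z => 1 - z / r) z := by fun_prop
  exact (hdiff.clog (one_sub_div_mem_slitPlane hr hz)).differentiableWithinAt

lemma differentiableOn_sumLogOneSubDiv (hs : ∀ r ∈ s, 1 ≤ ‖r‖) :
    DifferentiableOn ℂ (sumLogOneSubDiv s) (ball 0 1) := by
  unfold sumLogOneSubDiv
  induction s using Multiset.induction_on with
  | empty =>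
    simp only [Multiset.map_zero, Multiset.sum_zero]
    exact differentiableOn_const 0
  | cons r s ih =>
    simp only [Multiset.map_cons, Multiset.sum_cons]
    exact (differentiableOn_log_one_sub_div (hs r (Multiset.mem_cons_self r s))).add
      (ih fun r' hr' => hs r' (Multiset.mem_cons_of_mem hr'))

lemma exp_sumLogOneSubDiv {z : ℂ} (hs : ∀ r ∈ s, 1 ≤ ‖r‖) (hz : z ∈ ball 0 1) :
    exp (sumLogOneSubDiv s z) = (s.map fun r => 1 - z / r).prod := by
  rw [sumLogOneSubDiv, exp_multiset_sum, Multiset.map_map]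
  exact congrArg _ (Multiset.map_congr rfl fun r hr =>
    exp_log (slitPlane_ne_zero (one_sub_div_mem_slitPlane (hs r hr) hz)))

lemma norm_sumLogOneSubDiv_le {b : ℝ} {z : ℂ} (hs : ∀ r ∈ s, 1 ≤ ‖r‖) (hz : z ∈ ball 0 b)
    (hb : b < 1) : ‖sumLogOneSubDiv s z‖ ≤ Multiset.card s * Real.log (1 / (1 - b)) := by
  have hterm : ∀ r ∈ s, ‖log (1 - z / r)‖ ≤ Real.log (1 / (1 - b)) := fun r hr =>
    norm_log_one_sub_le_log_one_div_one_sub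
      ((norm_div_le_of_one_le_norm (hs r hr)).trans (mem_ball_zero_iff.mp hz).le) hb
  calc ‖sumLogOneSubDiv s z‖ ≤ ((s.map fun r => log (1 - z / r)).map norm).sum :=
        norm_multiset_sum_le _
    _ ≤ Multiset.card ((s.map fun r => log (1 - z / r)).map norm) •
          Real.log (1 / (1 - b)) :=
        Multiset.sum_le_card_nsmul _ _ (by
          simpa only [Multiset.map_map, Multiset.forall_mem_map_iff, Function.comp_apply]
            using hterm)
    _ = Multiset.card s * Real.log (1 / (1 - b)) := by
        rw [Multiset.card_map, Multiset.card_map, nsmul_eq_mul]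

end SumLogOneSubDiv

theorem polynomial_zero_free_on_disc_general
    (p : Polynomial ℂ) (d : ℕ) (hdeg : p.natDegree ≤ d)
    (hnz : ∀ z ∈ ball (0 : ℂ) 1, p.eval z ≠ 0)
    (b : ℝ) (hb1 : b < 1)
    (c₀ : ℂ) (hc₀ : Complex.exp c₀ = p.eval 0) :
    ∃ g : ℂ → ℂ, DifferentiableOn ℂ g (ball (0 : ℂ) b) ∧
      (∀ z ∈ ball (0 : ℂ) b, Complex.exp (g z) = p.eval z) ∧
      g 0 = c₀ ∧
      ∀ z ∈ ball (0 : ℂ) b, ‖g z‖ ≤ d * Real.log (1 / (1 - b)) + ‖c₀‖ := by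
  have hroots : ∀ r ∈ p.roots, 1 ≤ ‖r‖ := fun r hr =>
    not_lt.mp fun h => hnz r (mem_ball_zero_iff.mpr h) (isRoot_of_mem_roots hr)
  have hball : ball (0 : ℂ) b ⊆ ball 0 1 := ball_subset_ball hb1.le
  refine ⟨fun z => c₀ + sumLogOneSubDiv p.roots z,
    (differentiableOn_const c₀).add ((differentiableOn_sumLogOneSubDiv hroots).mono hball),
    fun z hz => ?_, by simp, fun z hz => ?_⟩
  · rw [exp_add, exp_sumLogOneSubDiv hroots (hball hz), hc₀,
      eval_eq_eval_zero_mul_prod_roots IsAlgClosed.card_roots_eq_natDegree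
        (hnz 0 (mem_ball_self one_pos)) z]
  · have hb : 0 ≤ b := (norm_nonneg z).trans (mem_ball_zero_iff.mp hz).le
    have hlog_nonneg : 0 ≤ Real.log (1 / (1 - b)) :=
      (norm_nonneg _).trans (norm_log_one_sub_le_log_one_div_one_sub (norm_zero.trans_le hb) hb1)
    have hcard : (Multiset.card p.roots : ℝ) ≤ d := by exact_mod_cast (card_roots' p).trans hdeg
    calc ‖c₀ + sumLogOneSubDiv p.roots z‖
        ≤ ‖c₀‖ + Multiset.card p.roots * Real.log (1 / (1 - b)) :=
          norm_add_le_of_le le_rfl (norm_sumLogOneSubDiv_le hroots hz hb1)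
      _ ≤ d * Real.log (1 / (1 - b)) + ‖c₀‖ := by rw [add_comm]; gcongr

/-- **Zero-freeness of nonvanishing polynomials on smaller discs.**
If a complex polynomial `p` of degree at most `d` does not vanish on the open unit disc,
and `b ∈ (0,1)`, then for any branch value `c₀` with `exp c₀ = p 0`, there is a holomorphic
logarithm `g` of `p` on the disc of radius `b` with `g 0 = c₀` and
`|g z| ≤ d * ln (1/(1-b)) + |c₀|` throughout. -/
theorem polynomial_zero_free_on_disc
    (p : Polynomial ℂ) (d : ℕ) (hdeg : p.natDegree ≤ d)
    (hnz : ∀ z ∈ ball (0 : ℂ) 1, p.eval z ≠ 0)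
    (b : ℝ) (hb0 : 0 < b) (hb1 : b < 1)
    (c₀ : ℂ) (hc₀ : Complex.exp c₀ = p.eval 0) :
    ∃ g : ℂ → ℂ, DifferentiableOn ℂ g (ball (0 : ℂ) b) ∧
      (∀ z ∈ ball (0 : ℂ) b, Complex.exp (g z) = p.eval z) ∧
      g 0 = c₀ ∧
      ∀ z ∈ ball (0 : ℂ) b, ‖g z‖ ≤ d * Real.log (1 / (1 - b)) + ‖c₀‖ :=
  polynomial_zero_free_on_disc_general p d hdeg hnz b hb1 c₀ hc₀
end

section
/- For every β ∈ ℂ and every δ ∈ (0,1), there exist a complex polynomial p and a real number δ₀ ∈ (0,1) such that: (1) p(0) = 0 and p(1−δ₀) = β; (2) p(𝔻) ⊆ S_{β,δ}, i.e., for every z in the open unit disc 𝔻, the value p(z) lies within Euclidean distance δ of the segment [0,β]. -/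
/-!
For `0 < r < 1` the map `z ↦ -log (1 - r z)` sends the unit disc into the half-strip
`-log 2 ≤ Re w ≤ -log (1 - r)`, `|Im w| ≤ π / 2`: its length `-log (1 - r)` is as large as we
like while its width stays bounded. A Taylor polynomial of this map is within `1` of it on the
disc, and real-valued at `z = r`, with value `c ≥ -log (1 - r) - 2`. Multiplying by `β / c`
maps the thickened half-strip onto a neighbourhood of `[0, β]` of width `O(‖β‖ / c)`, which is
below `δ` once `r` is close to `1`.
-/

open Metric Polynomial Finset Complex
open scoped Real

lemma Real.log_two_lt_one : Real.log 2 < 1 := by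
  have := Real.log_two_lt_d9
  norm_num at this
  linarith

lemma Real.exists_log_one_sub_eq_neg {K : ℝ} (hK : 0 < K) :
    ∃ r, 0 < r ∧ r < 1 ∧ Real.log (1 - r) = -K :=
  ⟨1 - Real.exp (-K), sub_pos.2 (Real.exp_lt_one_iff.2 (neg_neg_of_pos hK)),
    sub_lt_self _ (Real.exp_pos _), by simp⟩

namespace Complex

lemma log_le_re_log_one_sub {x : ℂ} {r : ℝ} (hx : ‖x‖ ≤ r) (hr : r < 1) :
    Real.log (1 - r) ≤ (log (1 - x)).re := by
  have h := norm_sub_norm_le (1 : ℂ) x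
  rw [norm_one] at h
  rw [log_re]
  exact Real.log_le_log (by linarith) (by linarith)

lemma re_log_one_sub_le_log_two {x : ℂ} (hx : ‖x‖ < 1) : (log (1 - x)).re ≤ Real.log 2 := by
  have hpos : 0 < ‖1 - x‖ := norm_pos_iff.2 (sub_ne_zero.2 (by rintro rfl; simp at hx))
  have h := norm_sub_le (1 : ℂ) x
  rw [norm_one] at h
  rw [log_re]
  exact Real.log_le_log hpos (by linarith)

lemma abs_im_log_one_sub_le {x : ℂ} (hx : ‖x‖ ≤ 1) : |(log (1 - x)).im| ≤ π / 2 := by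
  rw [log_im, abs_arg_le_pi_div_two_iff, sub_re, one_re, sub_nonneg]
  exact (re_le_norm x).trans hx

end Complex

/-- The constant coefficient is `(0 : ℂ)⁻¹ = 0`, so this is `∑_{1 ≤ j < n} X ^ j / j`,
a Taylor polynomial of `-log (1 - X)`. -/
noncomputable def logSeriesPoly (n : ℕ) : ℂ[X] := ∑ j ∈ range n, C ((j : ℂ)⁻¹) * X ^ j

lemma eval_logSeriesPoly (n : ℕ) (x : ℂ) :
    (logSeriesPoly n).eval x = ∑ j ∈ range n, x ^ j / j := by
  simp [logSeriesPoly, eval_finsetSum, div_eq_inv_mul]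

lemma eval_logSeriesPoly_eq_neg_logTaylor (n : ℕ) (x : ℂ) :
    (logSeriesPoly n).eval x = -logTaylor n (-x) := by
  rw [eval_logSeriesPoly, logTaylor, ← sum_neg_distrib]
  refine sum_congr rfl fun j _ => ?_
  have hsign : (-1 : ℂ) ^ (j + 1) * (-1) ^ j = -1 := by
    rw [← pow_add]
    exact Odd.neg_one_pow ⟨j, by ring⟩
  rw [neg_pow x]
  linear_combination (x ^ j / j) * hsign

lemma eval_zero_logSeriesPoly (n : ℕ) : (logSeriesPoly n).eval 0 = 0 := by
  rw [eval_logSeriesPoly_eq_neg_logTaylor, neg_zero, logTaylor_at_zero, neg_zero]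

lemma eval_ofReal_logSeriesPoly (n : ℕ) (x : ℝ) :
    (logSeriesPoly n).eval (x : ℂ) = ((∑ j ∈ range n, x ^ j / j : ℝ) : ℂ) := by
  rw [eval_logSeriesPoly]
  push_cast
  rfl

lemma norm_eval_logSeriesPoly_add_log_le (n : ℕ) {x : ℂ} (hx : ‖x‖ < 1) :
    ‖(logSeriesPoly (n + 1)).eval x + log (1 - x)‖ ≤ ‖x‖ ^ (n + 1) * (1 - ‖x‖)⁻¹ / (n + 1) := by
  have h := norm_log_sub_logTaylor_le n (z := -x) (by rwa [norm_neg])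
  rw [norm_neg, ← sub_eq_add_neg] at h
  rwa [eval_logSeriesPoly_eq_neg_logTaylor, neg_add_eq_sub]

lemma exists_forall_norm_eval_logSeriesPoly_add_log_le_one {r : ℝ} (hr : r < 1) :
    ∃ n, ∀ x : ℂ, ‖x‖ ≤ r → ‖(logSeriesPoly n).eval x + log (1 - x)‖ ≤ 1 := by
  obtain ⟨n, hn⟩ := exists_pow_lt_of_lt_one (sub_pos.2 hr) hr
  refine ⟨n + 1, fun x hx => ?_⟩
  have hx1 : ‖x‖ < 1 := hx.trans_lt hr
  have hr0 : 0 ≤ r := (norm_nonneg x).trans hx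
  have hpow : ‖x‖ ^ (n + 1) ≤ r ^ n :=
    (pow_le_pow_of_le_one (norm_nonneg x) hx1.le n.le_succ).trans (by gcongr)
  calc _ ≤ ‖x‖ ^ (n + 1) * (1 - ‖x‖)⁻¹ / (n + 1) := norm_eval_logSeriesPoly_add_log_le n hx1
    _ ≤ r ^ n * (1 - r)⁻¹ / 1 := by
        have : 0 < 1 - r := sub_pos.2 hr
        gcongr
        linarith [n.cast_nonneg (α := ℝ)]
    _ ≤ 1 := by
        rw [div_one, ← div_eq_mul_inv, div_le_one (sub_pos.2 hr)]
        exact hn.le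

lemma eval_logSeriesPoly_mem_halfStrip {n : ℕ} {r : ℝ}
    (hn : ∀ x : ℂ, ‖x‖ ≤ r → ‖(logSeriesPoly n).eval x + log (1 - x)‖ ≤ 1) (hr : r < 1)
    {x : ℂ} (hx : ‖x‖ ≤ r) :
    -2 ≤ ((logSeriesPoly n).eval x).re ∧ ((logSeriesPoly n).eval x).re ≤ 1 - Real.log (1 - r) ∧
      |((logSeriesPoly n).eval x).im| ≤ 3 := by
  have hre := (abs_re_le_norm _).trans (hn x hx)
  have him := (abs_im_le_norm _).trans (hn x hx)
  rw [add_re, abs_le] at hre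
  rw [add_im, abs_le] at him
  have hlog_lo := log_le_re_log_one_sub hx hr
  have hlog_hi := re_log_one_sub_le_log_two (hx.trans_lt hr)
  have harg := abs_le.1 (abs_im_log_one_sub_le (hx.trans hr.le))
  refine ⟨?_, ?_, abs_le.2 ⟨?_, ?_⟩⟩ <;> linarith [Real.log_two_lt_one, Real.pi_le_four]

lemma exists_eval_logSeriesPoly_mul_self_eq_ofReal {n : ℕ} {r : ℝ}
    (hn : ∀ x : ℂ, ‖x‖ ≤ r → ‖(logSeriesPoly n).eval x + log (1 - x)‖ ≤ 1)
    (hr0 : 0 ≤ r) (hr : r < 1) :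
    ∃ c : ℝ, (logSeriesPoly n).eval (r * r : ℂ) = c ∧ -Real.log (1 - r) - 2 ≤ c := by
  refine ⟨_, by rw [← ofReal_mul, eval_ofReal_logSeriesPoly], ?_⟩
  have hrr : ‖(r * r : ℂ)‖ ≤ r := by
    rw [← ofReal_mul, norm_real, Real.norm_of_nonneg (by positivity)]
    nlinarith
  have h := (abs_re_le_norm _).trans (hn _ hrr)
  rw [← ofReal_mul, eval_ofReal_logSeriesPoly, ← ofReal_one, ← ofReal_sub,
    ← ofReal_log (by nlinarith), ← ofReal_add, ofReal_re, abs_le] at h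
  have hfactor : Real.log (1 - r * r) = Real.log (1 - r) + Real.log (1 + r) := by
    rw [← Real.log_mul (by linarith) (by linarith)]
    ring_nf
  have hlog : Real.log (1 + r) ≤ Real.log 2 := Real.log_le_log (by linarith) (by linarith)
  linarith [Real.log_two_lt_one]

lemma exists_mem_Icc_norm_sub_ofReal_le {w : ℂ} {c A : ℝ} (hc : 0 ≤ c)
    (hre : w.re ∈ Set.Icc (-A) (c + A)) (him : |w.im| ≤ A) :
    ∃ s ∈ Set.Icc 0 c, ‖w - s‖ ≤ 2 * A := by
  refine ⟨max 0 (min c w.re), ⟨le_max_left _ _, max_le hc (min_le_left _ _)⟩, ?_⟩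
  have hs : |w.re - max 0 (min c w.re)| ≤ A := by
    rw [abs_le]
    constructor <;> rcases max_cases 0 (min c w.re) with h | h <;>
      rcases min_cases c w.re with h' | h' <;> linarith [hre.1, hre.2, abs_nonneg w.im]
  calc ‖w - max 0 (min c w.re)‖
      ≤ |(w - max 0 (min c w.re)).re| + |(w - max 0 (min c w.re)).im| :=
        norm_le_abs_re_add_abs_im _
    _ ≤ 2 * A := by
        simp only [sub_re, ofReal_re, sub_im, ofReal_im, sub_zero]
        linarith

lemma infDist_div_mul_segment_le (β w : ℂ) {c s : ℝ} (hc : 0 < c) (hs : s ∈ Set.Icc 0 c) :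
    infDist (β / c * w) (segment ℝ 0 β) ≤ ‖β‖ / c * ‖w - s‖ := by
  have hmem : (s / c) • β ∈ segment ℝ 0 β := by
    rw [segment_eq_image]
    exact ⟨s / c, ⟨div_nonneg hs.1 hc.le, (div_le_one hc).2 hs.2⟩, by simp⟩
  calc infDist (β / c * w) (segment ℝ 0 β) ≤ dist (β / c * w) ((s / c) • β) :=
        infDist_le_dist_of_mem hmem
    _ = ‖β / c * (w - s)‖ := by
        rw [dist_eq_norm, real_smul]
        congr 1
        push_cast
        field_simp
    _ = ‖β‖ / c * ‖w - s‖ := by rw [norm_mul, norm_div, norm_real, Real.norm_of_nonneg hc.le]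

theorem exists_polynomial_disc_to_strip_general
    (β : ℂ) (δ : ℝ) (hδ0 : 0 < δ) :
    ∃ (p : Polynomial ℂ) (δ₀ : ℝ), 0 < δ₀ ∧ δ₀ < 1 ∧
      p.eval 0 = 0 ∧ p.eval ((1 : ℂ) - δ₀) = β ∧
      ∀ z ∈ ball (0 : ℂ) 1, Metric.infDist (p.eval z) (segment ℝ (0 : ℂ) β) < δ := by
  set K := 6 * ‖β‖ / δ + 3
  have hK : 3 ≤ K := le_add_of_nonneg_left (by positivity)
  obtain ⟨r, hr0, hr1, hlog⟩ := Real.exists_log_one_sub_eq_neg (by linarith : 0 < K)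
  obtain ⟨n, hn⟩ := exists_forall_norm_eval_logSeriesPoly_add_log_le_one hr1
  obtain ⟨c, hc, hcK⟩ := exists_eval_logSeriesPoly_mul_self_eq_ofReal hn hr0.le hr1
  have hc0 : 0 < c := by linarith
  refine ⟨C (β / c) * (logSeriesPoly n).comp (C (r : ℂ) * X), 1 - r, by linarith, by linarith,
    by simp [eval_zero_logSeriesPoly], by simp [hc, hc0.ne'], fun z hz => ?_⟩
  have hrz : ‖(r : ℂ) * z‖ ≤ r := by
    rw [mem_ball_zero_iff] at hz
    rw [norm_mul, norm_real, Real.norm_of_nonneg hr0.le]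
    exact mul_le_of_le_one_right hr0.le hz.le
  obtain ⟨hre_lo, hre_hi, him⟩ := eval_logSeriesPoly_mem_halfStrip hn hr1 hrz
  obtain ⟨s, hs, hdist⟩ :=
    exists_mem_Icc_norm_sub_ofReal_le hc0.le (A := 3) ⟨by linarith, by linarith⟩ him
  have hβ : 6 * ‖β‖ < δ * c := by
    have := div_mul_cancel₀ (6 * ‖β‖) hδ0.ne'
    nlinarith
  calc infDist _ (segment ℝ 0 β) ≤ ‖β‖ / c * ‖(logSeriesPoly n).eval (r * z) - s‖ := by
        simpa using infDist_div_mul_segment_le β _ hc0 hs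
    _ ≤ ‖β‖ / c * (2 * 3) := by gcongr
    _ < δ := by
        rw [div_mul_eq_mul_div, div_lt_iff₀ hc0]
        linarith

/-- **Polynomial transformation of the unit disc into a strip around a segment.**
For every `β ∈ ℂ` and `δ ∈ (0,1)` there is a polynomial `p` and `δ₀ ∈ (0,1)` such that
`p 0 = 0`, `p (1−δ₀) = β`, and `p` maps the open unit disc into the open `δ`-strip
of the segment `[0,β]`. -/
theorem exists_polynomial_disc_to_strip
    (β : ℂ) (δ : ℝ) (hδ0 : 0 < δ) (hδ1 : δ < 1) :
    ∃ (p : Polynomial ℂ) (δ₀ : ℝ), 0 < δ₀ ∧ δ₀ < 1 ∧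
      p.eval 0 = 0 ∧ p.eval ((1 : ℂ) - δ₀) = β ∧
      ∀ z ∈ ball (0 : ℂ) 1, Metric.infDist (p.eval z) (segment ℝ (0 : ℂ) β) < δ :=
  exists_polynomial_disc_to_strip_general β δ hδ0
end

section
/- Let δ ∈ (0,1) and define C = 1 − exp(−1/δ), n = ⌊(1 + 1/δ)·exp(1 + 1/δ)⌋, ρ = (1 − exp(−1 − 1/δ))/(1 − exp(−1/δ)) > 1, and the polynomial q_δ(z) = (Σ_{k=1}^{n} C^k/k)^{−1} · Σ_{k=1}^{n} (C z)^k / k. Then q_δ(0) = 0, q_δ(1) = 1, and for all z ∈ ℂ with |z| < ρ: the real part of q_δ(z) lies in the interval [−δ, 1 + 2δ] and the imaginary part satisfies |Im(q_δ(z))| ≤ 2δ. -/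
/-!
With `t = 1/δ`, the polynomial `q_δ` is the degree-`n` Taylor polynomial of `-log (1 - C z)`,
normalised by its value at `z = 1`, which is close to `-log (1 - C) = t`. For `|z| < ρ` the
point `w = C z` satisfies `|w| ≤ a := 1 - e^{-1-t}`, where the Taylor remainder is at most
`a^{n+1} / ((n+1)(1-a)) ≤ e^{-(1+t)} / (1+t) ≤ 1/10` thanks to the choice of `n`. On that disc
`-log (1 - w)` has real part in `[-log 2, 1 + t]` and imaginary part in `[-π/2, π/2]`, and
dividing by the normaliser `≈ 1/δ` puts it in the strip `[-δ, 1 + 2δ] × [-2δ, 2δ]`.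
-/

open Finset

namespace Complex

lemma logTaylor_succ_neg (n : ℕ) (w : ℂ) :
    logTaylor (n + 1) (-w) = -∑ k ∈ Icc 1 n, w ^ k / k := by
  have hsub : Icc 1 n ⊆ range (n + 1) := fun k hk => by simp at hk ⊢; omega
  rw [logTaylor, ← Finset.sum_subset hsub fun k hk hk' => by
    obtain rfl : k = 0 := by simp at hk hk'; omega
    simp, ← Finset.sum_neg_distrib]
  refine Finset.sum_congr rfl fun k _ => ?_
  rw [neg_pow w, ← mul_assoc, ← pow_add, Odd.neg_one_pow ⟨k, by ring⟩]
  ring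

lemma norm_neg_log_one_sub_sub_sum_le (n : ℕ) {w : ℂ} (hw : ‖w‖ < 1) :
    ‖-log (1 - w) - ∑ k ∈ Icc 1 n, w ^ k / k‖ ≤ ‖w‖ ^ (n + 1) * (1 - ‖w‖)⁻¹ / (n + 1) := by
  have h := norm_log_sub_logTaylor_le n (z := -w) (by rwa [norm_neg])
  rw [logTaylor_succ_neg, norm_neg, ← sub_eq_add_neg] at h
  have hneg : -log (1 - w) - ∑ k ∈ Icc 1 n, w ^ k / k
      = -(log (1 - w) - -∑ k ∈ Icc 1 n, w ^ k / k) := by ring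
  rwa [hneg, norm_neg]

lemma neg_log_one_sub_re_le {w : ℂ} {a : ℝ} (hw : ‖w‖ ≤ a) (ha : a < 1) :
    (-log (1 - w)).re ≤ -Real.log (1 - a) := by
  have h : 1 - a ≤ ‖1 - w‖ := by
    linarith [norm_sub_norm_le (1 : ℂ) w, norm_one (α := ℂ)]
  rw [neg_re, log_re, neg_le_neg_iff]
  exact Real.log_le_log (by linarith) h

lemma neg_log_two_le_neg_log_one_sub_re {w : ℂ} (hw : ‖w‖ < 1) :
    -Real.log 2 ≤ (-log (1 - w)).re := by
  have hpos : 0 < ‖1 - w‖ := norm_pos_iff.2 (sub_ne_zero.2 fun h => by simp [← h] at hw)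
  have h2 : ‖1 - w‖ ≤ 2 := by linarith [norm_sub_le (1 : ℂ) w, norm_one (α := ℂ)]
  rw [neg_re, log_re, neg_le_neg_iff]
  exact Real.log_le_log hpos h2

lemma abs_neg_log_one_sub_im_le {w : ℂ} (hw : ‖w‖ ≤ 1) :
    |(-log (1 - w)).im| ≤ Real.pi / 2 := by
  rw [neg_im, abs_neg, log_im, abs_arg_le_pi_div_two_iff, sub_re, one_re, sub_nonneg]
  exact (re_le_norm w).trans hw

end Complex

lemma pow_succ_mul_inv_div_le_exp_neg_div {r a m : ℝ} (n : ℕ) (hr : 0 ≤ r) (hra : r ≤ a)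
    (ha : a < 1) (hm : 0 < m) (hmn : m ≤ (n + 1) * (1 - a)) :
    r ^ (n + 1) * (1 - r)⁻¹ / (n + 1) ≤ Real.exp (-m) / m := by
  have hexp : a ^ (n + 1) ≤ Real.exp (-((n + 1) * (1 - a))) := by
    calc a ^ (n + 1) ≤ Real.exp (a - 1) ^ (n + 1) :=
          pow_le_pow_left₀ (hr.trans hra) (by linarith [Real.add_one_le_exp (a - 1)]) _
      _ = Real.exp (-((n + 1) * (1 - a))) := by rw [← Real.exp_nat_mul]; push_cast; ring_nf
  calc r ^ (n + 1) * (1 - r)⁻¹ / (n + 1)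
      ≤ a ^ (n + 1) * (1 - a)⁻¹ / (n + 1) := by
        have ha0 : 0 ≤ a := hr.trans hra
        gcongr
        exact inv_nonneg.2 (by linarith)
    _ = a ^ (n + 1) / ((n + 1) * (1 - a)) := by
        field_simp
    _ ≤ Real.exp (-((n + 1) * (1 - a))) / ((n + 1) * (1 - a)) := by gcongr
    _ ≤ Real.exp (-m) / m := by gcongr

lemma exp_neg_div_self_le {x : ℝ} (hx : 2 ≤ x) : Real.exp (-x) / x ≤ 1 / 10 := by
  have h5 : 5 ≤ Real.exp x := by
    nlinarith [Real.quadratic_le_exp_of_nonneg (x := x) (by linarith)]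
  rw [Real.exp_neg, div_le_div_iff₀ (by positivity) (by norm_num), inv_mul_le_iff₀ (by positivity)]
  nlinarith

lemma le_natFloor_mul_exp_add_one_mul_exp_neg (x : ℝ) :
    x ≤ (⌊x * Real.exp x⌋₊ + 1) * Real.exp (-x) := by
  have h := (Nat.lt_floor_add_one (x * Real.exp x)).le
  calc x = x * Real.exp x * Real.exp (-x) := by rw [mul_assoc, ← Real.exp_add]; simp
    _ ≤ _ := by gcongr

lemma norm_neg_log_one_sub_sub_sum_floor_le {t : ℝ} (ht : 1 ≤ t) {w : ℂ}
    (hw : ‖w‖ ≤ 1 - Real.exp (-1 - t)) :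
    ‖-Complex.log (1 - w) - ∑ k ∈ Icc 1 ⌊(1 + t) * Real.exp (1 + t)⌋₊, w ^ k / k‖ ≤ 1 / 10 := by
  have hn := le_natFloor_mul_exp_add_one_mul_exp_neg (1 + t)
  rw [neg_add', ← sub_sub_cancel 1 (Real.exp (-1 - t))] at hn
  refine (Complex.norm_neg_log_one_sub_sub_sum_le _ (hw.trans_lt ?_)).trans <|
    (pow_succ_mul_inv_div_le_exp_neg_div _ (norm_nonneg w) hw ?_ (by linarith) hn).trans
      (exp_neg_div_self_le (by linarith)) <;>
  linarith [Real.exp_pos (-1 - t)]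

lemma abs_sub_sum_one_sub_exp_neg_pow_div_le {t : ℝ} (ht : 1 ≤ t) :
    |t - ∑ k ∈ Icc 1 ⌊(1 + t) * Real.exp (1 + t)⌋₊, (1 - Real.exp (-t)) ^ k / k| ≤ 1 / 10 := by
  have hC : ‖((1 - Real.exp (-t) : ℝ) : ℂ)‖ ≤ 1 - Real.exp (-1 - t) := by
    rw [Complex.norm_real, Real.norm_of_nonneg (by simp; linarith), sub_le_sub_iff_left,
      Real.exp_le_exp]
    linarith
  have h := norm_neg_log_one_sub_sub_sum_floor_le ht hC
  have hsum : ∑ k ∈ Icc 1 ⌊(1 + t) * Real.exp (1 + t)⌋₊, ((1 - Real.exp (-t) : ℝ) : ℂ) ^ k / k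
      = ((∑ k ∈ Icc 1 ⌊(1 + t) * Real.exp (1 + t)⌋₊, (1 - Real.exp (-t)) ^ k / k : ℝ) : ℂ) := by
    push_cast; rfl
  rwa [hsum, Complex.ofReal_sub 1, Complex.ofReal_one, sub_sub_cancel,
    ← Complex.ofReal_log (Real.exp_pos _).le, Real.log_exp, ← Complex.ofReal_neg, neg_neg,
    ← Complex.ofReal_sub, Complex.norm_real] at h

open Complex in
lemma re_inv_mul_mem_Icc_and_abs_im_le {δ S : ℝ} {F L : ℂ} (hδ0 : 0 < δ) (hδ1 : δ ≤ 1)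
    (hS : |1 / δ - S| ≤ 1 / 10) (hLF : ‖L - F‖ ≤ 1 / 10)
    (hLre : L.re ∈ Set.Icc (-Real.log 2) (1 + 1 / δ)) (hLim : |L.im| ≤ Real.pi / 2) :
    ((S : ℂ)⁻¹ * F).re ∈ Set.Icc (-δ) (1 + 2 * δ) ∧ |((S : ℂ)⁻¹ * F).im| ≤ 2 * δ := by
  have hS_lower : 1 / δ - 1 / 10 ≤ S := by linarith [(abs_le.1 hS).2]
  have hS0 : 0 < S := by linarith [one_le_one_div hδ0 hδ1]
  have hδS : 9 / 10 ≤ δ * S := by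
    have h := mul_le_mul_of_nonneg_left hS_lower hδ0.le
    rw [mul_sub, mul_one_div_cancel hδ0.ne'] at h
    linarith
  have hre := abs_le.1 ((abs_re_le_norm (L - F)).trans hLF)
  have him := abs_le.1 ((abs_im_le_norm (L - F)).trans hLF)
  rw [sub_re] at hre
  rw [sub_im] at him
  obtain ⟨hLim_lo, hLim_hi⟩ := abs_le.1 hLim
  rw [← ofReal_inv, re_ofReal_mul, im_ofReal_mul, abs_mul, abs_inv, abs_of_pos hS0,
    Set.mem_Icc, le_inv_mul_iff₀ hS0, inv_mul_le_iff₀ hS0, inv_mul_le_iff₀ hS0, abs_le]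
  refine ⟨⟨?_, ?_⟩, ?_, ?_⟩
  · linarith [Real.log_two_lt_d9, hLre.1]
  · linarith [hLre.2]
  · linarith [Real.pi_lt_d2]
  · linarith [Real.pi_lt_d2]

/-- **Barvinok's explicit disc-to-strip polynomial (Lemma 2.2.3 of Barvinok).**
For `δ ∈ (0,1)`, with `C = 1 − e^{−1/δ}`, `n = ⌊(1 + 1/δ)e^{1+1/δ}⌋` and
`ρ = (1 − e^{−1−1/δ})/(1 − e^{−1/δ}) > 1`, the polynomial
`q_δ(z) = (Σ_{k=1}^n C^k/k)⁻¹ Σ_{k=1}^n (Cz)^k/k` satisfies `q_δ(0)=0`, `q_δ(1)=1`, and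
for all `|z| < ρ` one has `Re q_δ(z) ∈ [−δ, 1+2δ]` and `|Im q_δ(z)| ≤ 2δ`. -/
theorem barvinok_qdelta_properties
    (δ : ℝ) (hδ0 : 0 < δ) (hδ1 : δ < 1)
    (C : ℝ) (hC : C = 1 - Real.exp (-(1 / δ)))
    (n : ℕ) (hn : n = ⌊(1 + 1 / δ) * Real.exp (1 + 1 / δ)⌋₊)
    (ρ : ℝ) (hρ : ρ = (1 - Real.exp (-1 - 1 / δ)) / (1 - Real.exp (-(1 / δ))))
    (q : ℂ → ℂ)
    (hq : ∀ z : ℂ, q z =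
      (∑ k ∈ Icc 1 n, (C : ℂ) ^ k / (k : ℂ))⁻¹ * ∑ k ∈ Icc 1 n, ((C : ℂ) * z) ^ k / (k : ℂ)) :
    1 < ρ ∧ q 0 = 0 ∧ q 1 = 1 ∧
      ∀ z : ℂ, ‖z‖ < ρ →
        (q z).re ∈ Set.Icc (-δ) (1 + 2 * δ) ∧ |(q z).im| ≤ 2 * δ := by
  set t := 1 / δ
  have ht : 1 < t := one_lt_one_div hδ0 hδ1
  set a := 1 - Real.exp (-1 - t)
  have hC0 : 0 < C := by rw [hC, sub_pos, Real.exp_lt_one_iff]; linarith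
  have hCa : C < a := by rw [hC, sub_lt_sub_iff_left, Real.exp_lt_exp]; linarith
  have ha1 : a < 1 := by linarith [Real.exp_pos (-1 - t)]
  have hρa : ρ = a / C := by rw [hρ, hC]
  have hS := abs_sub_sum_one_sub_exp_neg_pow_div_le ht.le
  rw [← hC, ← hn] at hS
  set S : ℝ := ∑ k ∈ Icc 1 n, C ^ k / k
  have hS_cast : ∑ k ∈ Icc 1 n, (C : ℂ) ^ k / (k : ℂ) = (S : ℂ) := by push_cast [S]; rfl
  refine ⟨hρa ▸ (one_lt_div hC0).2 hCa, ?_, ?_, fun z hz => ?_⟩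
  · have hzero : ∑ k ∈ Icc 1 n, ((C : ℂ) * 0) ^ k / (k : ℂ) = 0 :=
      Finset.sum_eq_zero fun k hk => by rw [mul_zero, zero_pow (by simp at hk; omega), zero_div]
    rw [hq, hzero, mul_zero]
  · have hS0 : S ≠ 0 := by linarith [(abs_le.1 hS).2]
    simp [hq, hS_cast, hS0]
  · have hw : ‖(C : ℂ) * z‖ ≤ a := by
      rw [norm_mul, Complex.norm_real, Real.norm_of_nonneg hC0.le]
      have := mul_lt_mul_of_pos_left hz hC0
      rw [hρa, mul_div_cancel₀ _ hC0.ne'] at this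
      exact this.le
    rw [hq, hS_cast]
    exact re_inv_mul_mem_Icc_and_abs_im_le hδ0 hδ1.le hS
      (hn ▸ norm_neg_log_one_sub_sub_sum_floor_le ht.le hw)
      ⟨Complex.neg_log_two_le_neg_log_one_sub_re (hw.trans_lt ha1),
        (Complex.neg_log_one_sub_re_le hw ha1).trans_eq (by simp [a, t]; ring)⟩
      (Complex.abs_neg_log_one_sub_im_le (hw.trans ha1.le))
end

section
/- Let R be a (not necessarily commutative) ring with unit, U a finite set, and H : U → R. For S ⊆ U and ℓ ∈ ℕ define H_{S,ℓ} = Σ_{f : [ℓ] → S surjective} H_{f(1)}·H_{f(2)}·⋯·H_{f(ℓ)}, with boundary cases H_{∅,0} = 1 and H_{S,ℓ} = 0 whenever ℓ < |S| or (S = ∅ and ℓ > 0). Then for every S ⊆ U and every ℓ ≥ 1, the recurrence H_{S,ℓ} = Σ_{j ∈ S} H_j · (H_{S,ℓ−1} + H_{S∖{j},ℓ−1}) holds. -/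
open Finset

/-- `surjProdSum H S ℓ` is `H_{S,ℓ} = Σ_{f : [ℓ] ↠ S} H_{f(1)} ⋯ H_{f(ℓ)}`, the sum over
all surjections `f` from `{1,…,ℓ}` onto `S` of the ordered products of the `H`-values.
In particular it equals `1` when `ℓ = 0` and `S = ∅`, and it is `0` whenever `ℓ < |S|`
or (`S = ∅` and `ℓ > 0`). -/
def surjProdSum {R : Type*} [Ring R] {U : Type*} [DecidableEq U]
    (H : U → R) (S : Finset U) (ℓ : ℕ) : R :=
  ∑ f ∈ (Finset.univ : Finset (Fin ℓ → {x // x ∈ S})).filter Function.Surjective,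
    (List.ofFn fun i => H (f i).1).prod

/-- Sum over tails whose range misses `j` but covers everything else equals the
surjection-sum onto `S.erase j`. -/
lemma surjProdSum_erase_aux {R : Type*} [Ring R] {U : Type*} [DecidableEq U]
    (H : U → R) (S : Finset U) (j : {x // x ∈ S}) (n : ℕ) :
    ∑ g ∈ (Finset.univ : Finset (Fin n → {x // x ∈ S})).filter
        (fun g => (∀ s : {x // x ∈ S}, s ≠ j → ∃ i, g i = s) ∧ ¬ ∃ i, g i = j),
      (List.ofFn fun i => H (g i).1).prod
    = surjProdSum H (S.erase j.1) n := by
  rw [surjProdSum]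
  refine Finset.sum_bij'
    (fun g hg => fun i => (⟨(g i).1, ?_⟩ : {x // x ∈ S.erase j.1}))
    (fun h hh => fun i => (⟨(h i).1, Finset.mem_of_mem_erase (h i).2⟩ : {x // x ∈ S}))
    ?_ ?_ ?_ ?_ ?_
  · simp only [mem_filter, mem_univ, true_and] at hg
    refine Finset.mem_erase.2 ⟨?_, (g i).2⟩
    intro h
    exact hg.2 ⟨i, Subtype.ext h⟩
  · intro g hg
    simp only [mem_filter, mem_univ, true_and] at hg ⊢
    intro b
    have hb1 : b.1 ∈ S := Finset.mem_of_mem_erase b.2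
    have hbj : (⟨b.1, hb1⟩ : {x // x ∈ S}) ≠ j := by
      intro h
      exact (Finset.mem_erase.1 b.2).1 (congrArg Subtype.val h)
    obtain ⟨i, hi⟩ := hg.1 _ hbj
    exact ⟨i, Subtype.ext (by simpa using congrArg Subtype.val hi)⟩
  · intro h hh
    simp only [mem_filter, mem_univ, true_and] at hh ⊢
    constructor
    · intro s hs
      have hs' : s.1 ∈ S.erase j.1 :=
        Finset.mem_erase.2 ⟨fun hc => hs (Subtype.ext hc), s.2⟩
      obtain ⟨i, hi⟩ := hh ⟨s.1, hs'⟩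
      exact ⟨i, Subtype.ext (by simpa using congrArg Subtype.val hi)⟩
    · rintro ⟨i, hi⟩
      have := (Finset.mem_erase.1 (h i).2).1
      exact this (congrArg Subtype.val hi)
  · intro g hg; funext i; rfl
  · intro h hh; funext i; rfl
  · intro g hg; rfl

set_option maxHeartbeats 1000000 in
/-- **Recurrence for the surjection-sums `H_{S,ℓ}`:**
for every `S ⊆ U` and `ℓ ≥ 1`,
`H_{S,ℓ} = Σ_{j ∈ S} H_j · (H_{S,ℓ−1} + H_{S∖{j},ℓ−1})`. -/
theorem surjProdSum_recurrence
    {R : Type*} [Ring R] {U : Type*} [Fintype U] [DecidableEq U]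
    (H : U → R) (S : Finset U) (ℓ : ℕ) (hℓ : 1 ≤ ℓ) :
    surjProdSum H S ℓ =
      ∑ j ∈ S, H j * (surjProdSum H S (ℓ - 1) + surjProdSum H (S.erase j) (ℓ - 1)) := by
  obtain ⟨n, rfl⟩ : ∃ n, ℓ = n + 1 := ⟨ℓ - 1, (Nat.succ_pred_eq_of_pos hℓ).symm⟩
  simp only [Nat.add_sub_cancel]
  have key : ∀ j : {x // x ∈ S},
      ∑ f ∈ ((Finset.univ : Finset (Fin (n+1) → {x // x ∈ S})).filter
          Function.Surjective).filter (fun f => f 0 = j),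
        (List.ofFn fun i => H (f i).1).prod
      = H j.1 * (surjProdSum H S n + surjProdSum H (S.erase j.1) n) := by
    intro j
    have step1 :
        ∑ f ∈ ((Finset.univ : Finset (Fin (n+1) → {x // x ∈ S})).filter
            Function.Surjective).filter (fun f => f 0 = j),
          (List.ofFn fun i => H (f i).1).prod
        = ∑ g ∈ (Finset.univ : Finset (Fin n → {x // x ∈ S})).filter
            (fun g => ∀ s : {x // x ∈ S}, s ≠ j → ∃ i, g i = s),
          H j.1 * (List.ofFn fun i => H (g i).1).prod := by
      refine Finset.sum_bij' (fun f _ => fun i => f i.succ)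
        (fun g _ => Fin.cons j g) ?_ ?_ ?_ ?_ ?_
      · intro f hf
        simp only [mem_filter, mem_univ, true_and] at hf ⊢
        intro s hs
        obtain ⟨i, hi⟩ := hf.1 s
        rcases Fin.eq_zero_or_eq_succ i with h0 | ⟨k, hk⟩
        · rw [h0, hf.2] at hi
          exact absurd hi.symm hs
        · exact ⟨k, hk ▸ hi⟩
      · intro g hg
        simp only [mem_filter, mem_univ, true_and] at hg ⊢
        refine ⟨?_, Fin.cons_zero _ _⟩
        intro s
        by_cases hs : s = j
        · exact ⟨0, by simp [hs]⟩
        · obtain ⟨i, hi⟩ := hg s hs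
          exact ⟨i.succ, by simpa using hi⟩
      · intro f hf
        simp only [mem_filter, mem_univ, true_and] at hf
        funext i
        refine Fin.cases ?_ (fun k => ?_) i
        · exact (Fin.cons_zero _ _).trans hf.2.symm
        · exact Fin.cons_succ _ _ _
      · intro g hg
        funext i
        exact Fin.cons_succ _ _ _
      · intro f hf
        simp only [mem_filter, mem_univ, true_and] at hf
        rw [List.ofFn_succ, List.prod_cons, hf.2]
    rw [step1, ← Finset.mul_sum]
    congr 1
    rw [← Finset.sum_filter_add_sum_filter_not
      ((Finset.univ : Finset (Fin n → {x // x ∈ S})).filter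
        (fun g => ∀ s : {x // x ∈ S}, s ≠ j → ∃ i, g i = s))
      (fun g => ∃ i, g i = j)]
    congr 1
    · rw [surjProdSum]
      apply Finset.sum_congr _ (fun _ _ => rfl)
      ext g
      simp only [mem_filter, mem_univ, true_and]
      constructor
      · rintro ⟨h1, i, hi⟩ s
        by_cases hs : s = j
        · exact ⟨i, hs ▸ hi⟩
        · exact h1 s hs
      · intro hsurj
        exact ⟨fun s _ => hsurj s, hsurj j⟩
    · rw [← surjProdSum_erase_aux H S j n]
      apply Finset.sum_congr _ (fun _ _ => rfl)
      rw [Finset.filter_filter]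
  rw [surjProdSum, ← Finset.sum_fiberwise ((Finset.univ :
        Finset (Fin (n+1) → {x // x ∈ S})).filter Function.Surjective)
      (fun f => f 0) (fun f => (List.ofFn fun i => H (f i).1).prod),
    Finset.sum_congr rfl (fun j _ => key j)]
  exact Finset.sum_coe_sort S
    (fun j => H j * (surjProdSum H S n + surjProdSum H (S.erase j) n))
end

section
/- Let S be a nonempty finite set, let (M_j)_{j∈S} be N×N complex matrices with operator norm ‖M_j‖ ≤ h for every j ∈ S, let 𝒪 be an N×N positive semidefinite matrix, and let β ∈ ℂ. Then Σ_{l=|S|}^{∞} (|β|^l / l!) · Σ_{f : [l] → S surjective} |Tr[ M_{f(1)}·M_{f(2)}·⋯·M_{f(l)} · 𝒪 ]| ≤ Tr[𝒪] · (e^{|β|h} − 1)^{|S|}. In particular, the cluster weight W_S(β) = Σ_{l=|S|}^{∞} ((−β)^l / l!) · Σ_{f : [l] → S surjective} Tr[ M_{f(1)}·⋯·M_{f(l)} · 𝒪 ] converges absolutely and satisfies |W_S(β)| ≤ Tr[𝒪] · (e^{|β|h} − 1)^{|S|}. -/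
open Finset Matrix
open scoped ComplexOrder

/-!
Write `𝒪 = B Bᴴ`. Then `Tr[A 𝒪] = Σᵢ ⟪bᵢ, A bᵢ⟫` over the columns `bᵢ` of `B`, so
`|Tr[A 𝒪]| ≤ ‖A‖ Tr[𝒪]`, and a word of length `l` in the `M_j` contributes at most
`h^l Tr[𝒪]`. What remains is `Σ_l x^l / l! · #{surjections [l] → S}`, the exponential
generating function of surjections; inclusion–exclusion over the set of missed values turns it
into `Σ_{t ⊆ S} (-1)^|t| e^{(|S| - |t|) x} = (e^x - 1)^|S|`.
-/

theorem Fintype.card_filter_surjective_eq_sum_powerset {α β : Type*} [Fintype α]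
    [DecidableEq α] [Fintype β] [DecidableEq β] :
    (#{f : α → β | f.Surjective} : ℤ) =
      ∑ t ∈ (univ : Finset β).powerset, (-1 : ℤ) ^ #t * #tᶜ ^ Fintype.card α := by
  have hsurj : ({f : α → β | f.Surjective} : Finset (α → β)) =
      univ.inf fun b => ({f : α → β | ∀ a, f a ≠ b} : Finset (α → β))ᶜ := by
    ext f
    simp only [Finset.mem_inf, mem_filter, mem_univ, true_and, mem_compl]
    simp [Function.Surjective]
  have hmiss (t : Finset β) : t.inf (fun b => ({f : α → β | ∀ a, f a ≠ b} : Finset _)) =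
      Fintype.piFinset fun _ => tᶜ := by
    ext f
    simp only [Finset.mem_inf, mem_filter, mem_univ, true_and, Fintype.mem_piFinset, mem_compl]
    grind
  rw [hsurj, inclusion_exclusion_card_inf_compl]
  simp [hmiss]

theorem hasSum_pow_div_factorial_mul_card_filter_surjective {β : Type*} [Fintype β]
    [DecidableEq β] (x : ℝ) :
    HasSum (fun l : ℕ => x ^ l / l.factorial * #{f : Fin l → β | f.Surjective})
      ((Real.exp x - 1) ^ Fintype.card β) := by
  have hterm (l : ℕ) : x ^ l / l.factorial * (#{f : Fin l → β | f.Surjective} : ℝ) =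
      ∑ t ∈ (univ : Finset β).powerset, (-1) ^ #t * ((#tᶜ * x) ^ l / l.factorial) := by
    have := congrArg (Int.cast : ℤ → ℝ)
      (Fintype.card_filter_surjective_eq_sum_powerset (α := Fin l) (β := β))
    push_cast at this
    rw [this, mul_sum]
    refine sum_congr rfl fun t _ => ?_
    rw [Fintype.card_fin]
    ring
  have hexp : (Real.exp x - 1) ^ Fintype.card β =
      ∑ t ∈ (univ : Finset β).powerset, (-1) ^ #t * Real.exp (#tᶜ * x) := by
    rw [sub_eq_neg_add, ← Finset.card_univ, ← prod_const, prod_add]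
    refine sum_congr rfl fun t _ => ?_
    rw [prod_const, prod_const, ← compl_eq_univ_sdiff, Real.exp_nat_mul]
  simp only [hterm, hexp]
  refine hasSum_sum fun t _ => (?_ : HasSum _ _).mul_left _
  simpa [Real.exp_eq_exp_ℝ] using NormedSpace.expSeries_div_hasSum_exp ((#tᶜ : ℝ) * x)

theorem List.norm_prod_le_pow_length {R : Type*} [SeminormedRing R] (h1 : ‖(1 : R)‖ ≤ 1)
    {c : ℝ} : ∀ {l : List R}, (∀ a ∈ l, ‖a‖ ≤ c) → ‖l.prod‖ ≤ c ^ l.length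
  | [], _ => by simpa using h1
  | a :: l, hl => by
    rw [List.prod_cons, List.length_cons, pow_succ']
    have ha := hl a List.mem_cons_self
    refine (norm_mul_le _ _).trans (mul_le_mul ha ?_ (norm_nonneg _) ((norm_nonneg a).trans ha))
    exact List.norm_prod_le_pow_length h1 fun b hb => hl b (List.mem_cons_of_mem a hb)

namespace Matrix

variable {𝕜 n : Type*} [RCLike 𝕜] [Fintype n]

theorem norm_star_dotProduct_mulVec_le [DecidableEq n] (A : Matrix n n 𝕜) (x : n → 𝕜) :
    ‖star x ⬝ᵥ A *ᵥ x‖ ≤ ‖toEuclideanCLM (𝕜 := 𝕜) A‖ * ‖WithLp.toLp 2 x‖ ^ 2 := by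
  have hinner : star x ⬝ᵥ A *ᵥ x =
      inner 𝕜 (WithLp.toLp 2 x) (toEuclideanCLM (𝕜 := 𝕜) A (WithLp.toLp 2 x)) := by
    rw [EuclideanSpace.inner_eq_star_dotProduct, toEuclideanCLM_toLp, dotProduct_comm]
  calc ‖star x ⬝ᵥ A *ᵥ x‖
      ≤ ‖WithLp.toLp 2 x‖ * ‖toEuclideanCLM (𝕜 := 𝕜) A (WithLp.toLp 2 x)‖ :=
        hinner ▸ norm_inner_le_norm _ _
    _ ≤ ‖WithLp.toLp 2 x‖ * (‖toEuclideanCLM (𝕜 := 𝕜) A‖ * ‖WithLp.toLp 2 x‖) := by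
        gcongr; exact ContinuousLinearMap.le_opNorm _ _
    _ = _ := by ring

theorem re_star_dotProduct_self (x : n → 𝕜) :
    RCLike.re (star x ⬝ᵥ x) = ‖WithLp.toLp 2 x‖ ^ 2 := by
  rw [← inner_self_eq_norm_sq (𝕜 := 𝕜), EuclideanSpace.inner_eq_star_dotProduct, dotProduct_comm]

theorem trace_conjTranspose_mul_mul (A B : Matrix n n 𝕜) :
    (Bᴴ * A * B).trace = ∑ i, star (Bᵀ i) ⬝ᵥ A *ᵥ Bᵀ i := by
  simp only [trace, Matrix.diag, mul_mul_apply]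
  rfl

open scoped MatrixOrder in
theorem PosSemidef.norm_trace_mul_le [DecidableEq n] {A O : Matrix n n 𝕜} (hO : O.PosSemidef) :
    ‖(A * O).trace‖ ≤ ‖toEuclideanCLM (𝕜 := 𝕜) A‖ * RCLike.re O.trace := by
  obtain ⟨B, rfl⟩ := CStarAlgebra.nonneg_iff_eq_mul_star_self.mp hO.nonneg
  have htrace : (B * Bᴴ).trace = (Bᴴ * 1 * B).trace := by
    rw [mul_one, trace_mul_comm]
  rw [← mul_assoc, trace_mul_cycle, star_eq_conjTranspose, htrace, trace_conjTranspose_mul_mul,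
    trace_conjTranspose_mul_mul, map_sum, mul_sum]
  refine (norm_sum_le _ _).trans (sum_le_sum fun i _ => ?_)
  rw [one_mulVec, re_star_dotProduct_self]
  exact norm_star_dotProduct_mulVec_le A _

theorem PosSemidef.norm_trace_list_prod_mul_le [DecidableEq n] {O : Matrix n n 𝕜}
    (hO : O.PosSemidef) {c : ℝ} {l : List (Matrix n n 𝕜)}
    (hl : ∀ A ∈ l, ‖toEuclideanCLM (𝕜 := 𝕜) A‖ ≤ c) :
    ‖(l.prod * O).trace‖ ≤ c ^ l.length * RCLike.re O.trace := by
  refine hO.norm_trace_mul_le.trans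
    (mul_le_mul_of_nonneg_right ?_ (RCLike.nonneg_iff.mp hO.trace_nonneg).1)
  rw [map_list_prod, ← List.length_map (f := toEuclideanCLM (𝕜 := 𝕜))]
  exact List.norm_prod_le_pow_length ContinuousLinearMap.norm_id_le (by simpa using hl)

end Matrix

theorem cluster_weight_bound_general
    {S : Type*} [Fintype S] [DecidableEq S]
    (N : ℕ) (M : S → Matrix (Fin N) (Fin N) ℂ) (h : ℝ)
    (hM : ∀ j : S, ‖(Matrix.toEuclideanCLM (𝕜 := ℂ) (M j) :
        EuclideanSpace ℂ (Fin N) →L[ℂ] EuclideanSpace ℂ (Fin N))‖ ≤ h)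
    (𝒪 : Matrix (Fin N) (Fin N) ℂ) (h𝒪 : 𝒪.PosSemidef) (β : ℂ) :
    (Summable (fun l : ℕ => ‖β‖ ^ l / (Nat.factorial l) *
        ∑ f ∈ (Finset.univ : Finset (Fin l → S)).filter Function.Surjective,
          ‖Matrix.trace ((List.ofFn fun i => M (f i)).prod * 𝒪)‖) ∧
      ∑' l : ℕ, (‖β‖ ^ l / (Nat.factorial l) *
        ∑ f ∈ (Finset.univ : Finset (Fin l → S)).filter Function.Surjective,
          ‖Matrix.trace ((List.ofFn fun i => M (f i)).prod * 𝒪)‖) ≤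
        (Matrix.trace 𝒪).re * (Real.exp (‖β‖ * h) - 1) ^ (Fintype.card S)) ∧
    (∃ W : ℂ, HasSum (fun l : ℕ => (-β) ^ l / (Nat.factorial l) *
        ∑ f ∈ (Finset.univ : Finset (Fin l → S)).filter Function.Surjective,
          Matrix.trace ((List.ofFn fun i => M (f i)).prod * 𝒪)) W ∧
      ‖W‖ ≤ (Matrix.trace 𝒪).re * (Real.exp (‖β‖ * h) - 1) ^ (Fintype.card S)) := by
  set T : ℕ → ℝ := fun l => ‖β‖ ^ l / l.factorial *
    ∑ f ∈ (univ : Finset (Fin l → S)).filter Function.Surjective,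
      ‖((List.ofFn fun i => M (f i)).prod * 𝒪).trace‖
  have hmajorant := (hasSum_pow_div_factorial_mul_card_filter_surjective (β := S)
    (‖β‖ * h)).mul_left 𝒪.trace.re
  have hword (l : ℕ) (f : Fin l → S) :
      ‖((List.ofFn fun i => M (f i)).prod * 𝒪).trace‖ ≤ h ^ l * 𝒪.trace.re := by
    simpa using h𝒪.norm_trace_list_prod_mul_le (l := List.ofFn fun i => M (f i))
      (by simpa [List.forall_mem_ofFn_iff] using fun i => hM (f i))
  have hT (l : ℕ) :
      T l ≤ 𝒪.trace.re * ((‖β‖ * h) ^ l / l.factorial * #{f : Fin l → S | f.Surjective}) :=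
    calc T l ≤ ‖β‖ ^ l / l.factorial *
          (#{f : Fin l → S | f.Surjective} * (h ^ l * 𝒪.trace.re)) := by
          dsimp only [T]
          gcongr
          exact (sum_le_sum fun f _ => hword l f).trans_eq (by rw [sum_const, nsmul_eq_mul])
      _ = _ := by ring
  have hT_summable : Summable T :=
    hmajorant.summable.of_nonneg_of_le (fun l => by positivity) hT
  have hW (l : ℕ) : ‖(-β) ^ l / l.factorial * ∑ f ∈ (univ : Finset (Fin l → S)).filter
      Function.Surjective, ((List.ofFn fun i => M (f i)).prod * 𝒪).trace‖ ≤ T l := by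
    rw [norm_mul, norm_div, norm_pow, norm_neg, Complex.norm_natCast]
    dsimp only [T]
    gcongr
    exact norm_sum_le _ _
  exact ⟨⟨hT_summable, hasSum_le hT hT_summable.hasSum hmajorant⟩, _,
    (hT_summable.of_norm_bounded hW).hasSum,
    tsum_of_norm_bounded hmajorant fun l => (hW l).trans (hT l)⟩

/-- **Absolute convergence and bound for the cluster weight `W_S(β)`.**
Let `(M_j)_{j∈S}` be `N×N` complex matrices of operator norm at most `h`, `𝒪` a positive
semidefinite `N×N` matrix and `β ∈ ℂ`. Then the series of absolute values
`Σ_{l} (|β|^l/l!) Σ_{f:[l]↠S} |Tr[M_{f(1)}⋯M_{f(l)}𝒪]|` is summable with sum at most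
`Tr[𝒪]·(e^{|β|h}−1)^{|S|}`, and the cluster weight
`W_S(β) = Σ_l ((−β)^l/l!) Σ_{f:[l]↠S} Tr[M_{f(1)}⋯M_{f(l)}𝒪]` converges (absolutely)
with `|W_S(β)| ≤ Tr[𝒪]·(e^{|β|h}−1)^{|S|}`.
(Terms with `l < |S|` vanish since there is no surjection from `[l]` onto `S`.) -/
theorem cluster_weight_bound
    {S : Type*} [Fintype S] [DecidableEq S] [Nonempty S]
    (N : ℕ) (M : S → Matrix (Fin N) (Fin N) ℂ) (h : ℝ)
    (hM : ∀ j : S, ‖(Matrix.toEuclideanCLM (𝕜 := ℂ) (M j) :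
        EuclideanSpace ℂ (Fin N) →L[ℂ] EuclideanSpace ℂ (Fin N))‖ ≤ h)
    (𝒪 : Matrix (Fin N) (Fin N) ℂ) (h𝒪 : 𝒪.PosSemidef) (β : ℂ) :
    (Summable (fun l : ℕ => ‖β‖ ^ l / (Nat.factorial l) *
        ∑ f ∈ (Finset.univ : Finset (Fin l → S)).filter Function.Surjective,
          ‖Matrix.trace ((List.ofFn fun i => M (f i)).prod * 𝒪)‖) ∧
      ∑' l : ℕ, (‖β‖ ^ l / (Nat.factorial l) *
        ∑ f ∈ (Finset.univ : Finset (Fin l → S)).filter Function.Surjective,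
          ‖Matrix.trace ((List.ofFn fun i => M (f i)).prod * 𝒪)‖) ≤
        (Matrix.trace 𝒪).re * (Real.exp (‖β‖ * h) - 1) ^ (Fintype.card S)) ∧
    (∃ W : ℂ, HasSum (fun l : ℕ => (-β) ^ l / (Nat.factorial l) *
        ∑ f ∈ (Finset.univ : Finset (Fin l → S)).filter Function.Surjective,
          Matrix.trace ((List.ofFn fun i => M (f i)).prod * 𝒪)) W ∧
      ‖W‖ ≤ (Matrix.trace 𝒪).re * (Real.exp (‖β‖ * h) - 1) ^ (Fintype.card S)) :=
  cluster_weight_bound_general N M h hM 𝒪 h𝒪 β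
end

section
/- Let V be a finite set, and let S_1,…,S_m ⊆ V be nonempty subsets with |S_j| ≤ k for each j and such that every v ∈ V belongs to at most d of the sets S_j, where k,d ≥ 1 are integers. Let G be the dependency graph on vertex set [m] with an edge between distinct j, j' iff S_j ∩ S_{j'} ≠ ∅. Fix x ∈ V, let h > 0, and set β₀ = 1/(5·e·d·k·h). Then for every real r with 0 ≤ r < β₀, Σ_S (e^{rh} − 1)^{|S|} · exp(d·h·e²·r·|R_S|) ≤ e(e−1)·d·h·r, where the sum ranges over all nonempty subsets S ⊆ [m] such that G[S] is connected and x ∈ S_j for some j ∈ S, and R_S = ∪_{j∈S} S_j. -/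
open Finset
open scoped Classical

/-!
Bound each summand by `a ^ |T|` with `a = (e^{rh} - 1) e^{e² kd · rh}`, using `|R_T| ≤ k |T|`.
The dependency graph has maximum degree at most `Δ = kd`, and in any graph of maximum degree `Δ`
the sets `T` that contain a fixed vertex `j` and induce a connected subgraph satisfy
`∑ a ^ |T| ≤ c` as soon as `a (1 + c)^Δ ≤ c`: deleting `j` splits `T` into connected pieces, each
containing a neighbour of `j`, so by induction on `|T|` the sum is at most
`a ∏_{u ~ j} (1 + c) ≤ c`. With `c = e(e-1) rh` the condition `a (1 + c)^{kd} ≤ c` holds for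
`r < β₀`, and summing over the at most `d` sets `S_j` that contain `x` gives `d c`.
-/

theorem Finset.sum_le_sum_sum_of_subset_biUnion {ι γ β : Type*} [DecidableEq γ]
    [AddCommMonoid β] [PartialOrder β] [IsOrderedAddMonoid β] {f : γ → β} (hf : ∀ x, 0 ≤ f x)
    {s : Finset γ} {J : Finset ι} {t : ι → Finset γ} (hs : s ⊆ J.biUnion t) :
    ∑ x ∈ s, f x ≤ ∑ j ∈ J, ∑ x ∈ t j, f x := by
  refine (sum_le_sum_of_subset_of_nonneg hs fun x _ _ => hf x).trans ?_
  rw [← sup_eq_biUnion]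
  refine J.apply_sup_le_sum (f := fun s => ∑ x ∈ s, f x) sum_empty fun {u v} => ?_
  rw [sup_eq_union, ← sum_union_inter]
  exact le_add_of_nonneg_right (sum_nonneg fun x _ => hf x)

namespace Real

theorem exp_sub_one_le_mul_exp (x : ℝ) : exp x - 1 ≤ x * exp x := by
  have := mul_le_mul_of_nonneg_right (add_one_le_exp (-x)) (exp_pos x).le
  rw [← exp_add, neg_add_cancel, exp_zero] at this
  linarith

theorem one_add_pow_le_exp_mul {c : ℝ} (hc : -1 ≤ c) (n : ℕ) : (1 + c) ^ n ≤ exp (n * c) := by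
  rw [exp_nat_mul]
  exact pow_le_pow_left₀ (by linarith) (by linarith [add_one_le_exp c]) n

theorem exp_mul_card_biUnion_le {ι V : Type*} [DecidableEq V] {S : ι → Finset V} {k : ℕ}
    {y : ℝ} (hy : 0 ≤ y) (hcard : ∀ j, #(S j) ≤ k) (T : Finset ι) :
    exp (y * #(T.biUnion S)) ≤ exp (y * k) ^ #T := by
  rw [← exp_nat_mul, exp_le_exp, mul_comm (#T : ℝ), mul_assoc]
  gcongr
  exact_mod_cast (card_biUnion_le_card_mul T S k fun j _ => hcard j).trans_eq (mul_comm _ _)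

end Real

namespace SimpleGraph

variable {α : Type*} (G : SimpleGraph α)

def ReachableWithin (s : Set α) (u v : α) : Prop :=
  ∃ p : G.Walk u v, ∀ x ∈ p.support, x ∈ s

variable {G} {s : Set α} {u v w : α}

namespace ReachableWithin

lemma refl (hu : u ∈ s) : G.ReachableWithin s u u :=
  ⟨.nil, by simpa using hu⟩

lemma right_mem (h : G.ReachableWithin s u v) : v ∈ s :=
  h.elim fun p hp => hp v p.end_mem_support

lemma symm (h : G.ReachableWithin s u v) : G.ReachableWithin s v u :=
  h.elim fun p hp => ⟨p.reverse, by simpa using hp⟩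

lemma trans (h₁ : G.ReachableWithin s u v) (h₂ : G.ReachableWithin s v w) :
    G.ReachableWithin s u w := by
  obtain ⟨p, hp⟩ := h₁
  obtain ⟨q, hq⟩ := h₂
  exact ⟨p.append q, fun x hx => (Walk.mem_support_append_iff p q).1 hx |>.elim (hp x) (hq x)⟩

lemma of_adj (h : G.ReachableWithin s u v) (hvw : G.Adj v w) (hw : w ∈ s) :
    G.ReachableWithin s u w :=
  h.trans ⟨hvw.toWalk, by simp [h.right_mem, hw]⟩

end ReachableWithin

lemma Walk.reachableWithin_of_mem_support (p : G.Walk u v) (hp : ∀ x ∈ p.support, x ∈ s)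
    (hw : w ∈ p.support) : G.ReachableWithin s u w :=
  ⟨p.takeUntil w hw, fun x hx => hp x (p.support_takeUntil_subset_support hw hx)⟩

lemma reachable_induce_iff {u v : s} :
    (G.induce s).Reachable u v ↔ G.ReachableWithin s u v := by
  refine ⟨fun ⟨p⟩ => ⟨p.map (Embedding.induce s).toHom, fun x hx => ?_⟩,
    fun ⟨p, hp⟩ => ⟨p.induce s hp⟩⟩
  obtain ⟨y, -, rfl⟩ := List.mem_map.1 ((Walk.support_map _ p) ▸ hx)
  exact y.2

lemma connected_induce_iff_reachableWithin :
    (G.induce s).Connected ↔ s.Nonempty ∧ ∀ u ∈ s, ∀ v ∈ s, G.ReachableWithin s u v := by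
  rw [connected_iff, Set.nonempty_coe_sort]
  refine and_comm.trans (and_congr_right fun _ => ?_)
  exact ⟨fun h u hu v hv => reachable_induce_iff.1 (h ⟨u, hu⟩ ⟨v, hv⟩),
    fun h u v => reachable_induce_iff.2 (h u u.2 v v.2)⟩

variable (G) in
noncomputable def componentWithin (s : Finset α) (v : α) : Finset α :=
  {w ∈ s | G.ReachableWithin s v w}

section Component

variable {s : Finset α}

lemma mem_componentWithin : w ∈ G.componentWithin s v ↔ G.ReachableWithin s v w := by
  simp only [componentWithin, mem_filter, and_iff_right_iff_imp]
  exact ReachableWithin.right_mem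

lemma componentWithin_subset : G.componentWithin s v ⊆ s :=
  filter_subset _ _

lemma self_mem_componentWithin (hv : v ∈ s) : v ∈ G.componentWithin s v :=
  mem_componentWithin.2 (.refl hv)

lemma componentWithin_eq_of_mem (hu : u ∈ G.componentWithin s v) :
    G.componentWithin s u = G.componentWithin s v := by
  have hvu := mem_componentWithin.1 hu
  ext w
  simp only [mem_componentWithin]
  exact ⟨hvu.trans, hvu.symm.trans⟩

lemma ReachableWithin.componentWithin (h : G.ReachableWithin s v w) :
    G.ReachableWithin (G.componentWithin s v) v w :=
  h.elim fun p hp =>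
    ⟨p, fun _ hx => mem_componentWithin.2 (p.reachableWithin_of_mem_support hp hx)⟩

lemma connected_induce_componentWithin (hv : v ∈ s) :
    (G.induce (G.componentWithin s v : Set α)).Connected := by
  refine connected_induce_iff_reachableWithin.2 ⟨⟨v, self_mem_componentWithin hv⟩, ?_⟩
  intro a ha b hb
  rw [← componentWithin_eq_of_mem ha]
  exact ((mem_componentWithin.1 ha).symm.trans (mem_componentWithin.1 hb)).componentWithin

lemma exists_adj_mem_componentWithin_erase [DecidableEq α] {T : Finset α} {j : α}
    (hT : (G.induce (T : Set α)).Connected) (hj : j ∈ T) (hv : v ∈ T.erase j) :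
    ∃ u, G.Adj j u ∧ u ∈ G.componentWithin (T.erase j) v := by
  obtain ⟨p, hp⟩ := (connected_induce_iff_reachableWithin.1 hT).2 v (mem_of_mem_erase hv) j hj
  obtain ⟨d, hd, hd_mem, hd_not_mem⟩ := p.exists_boundary_dart (G.componentWithin (T.erase j) v)
    (self_mem_componentWithin hv) fun h => (mem_erase.1 (componentWithin_subset h)).1 rfl
  refine ⟨d.fst, ?_, hd_mem⟩
  -- the walk from `v` to `j` can only leave the component of `v` by stepping onto `j`
  obtain rfl : d.snd = j := by
    by_contra hne
    have hsnd : d.snd ∈ T.erase j :=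
      mem_erase.2 ⟨hne, hp _ (p.dart_snd_mem_support_of_mem_darts hd)⟩
    exact hd_not_mem (mem_componentWithin.2 ((mem_componentWithin.1 hd_mem).of_adj d.adj hsnd))
  exact d.adj.symm

end Component

section Branch

variable [LinearOrder α] {B : Finset α} {j : α}

variable (G) in
/-- Rooting each component of `B` at its least neighbour of `j` picks every component exactly
once, so that for a connected `T ∋ j` the branches of `T.erase j` partition it and determine `T`. -/
noncomputable def branch (B : Finset α) (j u : α) : Finset α :=
  if IsLeast {w | G.Adj j w ∧ w ∈ G.componentWithin B u} u then G.componentWithin B u else ∅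

lemma branch_subset : G.branch B j u ⊆ B := by
  unfold branch
  split_ifs
  exacts [componentWithin_subset, empty_subset _]

lemma branch_eq_empty_or :
    G.branch B j u = ∅ ∨ G.Adj j u ∧ u ∈ B ∧ G.branch B j u = G.componentWithin B u := by
  unfold branch
  split_ifs with h
  · exact .inr ⟨h.1.1, componentWithin_subset h.1.2, rfl⟩
  · exact .inl rfl

lemma pairwiseDisjoint_branch : (Set.univ : Set α).PairwiseDisjoint (G.branch B j) := by
  intro u _ u' _ hne
  refine Finset.disjoint_left.2 fun x hx hx' => hne ?_
  unfold branch at hx hx'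
  split_ifs at hx hx' with hu hu'
  · have hcomp : G.componentWithin B u = G.componentWithin B u' := by
      rw [← componentWithin_eq_of_mem hx, componentWithin_eq_of_mem hx']
    rw [hcomp] at hu
    exact hu.unique hu'
  all_goals simp at hx hx'

lemma biUnion_branch_erase [Fintype α] {T : Finset α} (hT : (G.induce (T : Set α)).Connected)
    (hj : j ∈ T) : univ.biUnion (G.branch (T.erase j) j) = T.erase j := by
  refine Subset.antisymm (biUnion_subset.2 fun _ _ => branch_subset) fun v hv => ?_
  obtain ⟨u₀, hju₀, hu₀⟩ := exists_adj_mem_componentWithin_erase hT hj hv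
  set F := {w ∈ G.componentWithin (T.erase j) v | G.Adj j w}
  have hF : F.Nonempty := ⟨u₀, mem_filter.2 ⟨hu₀, hju₀⟩⟩
  have hmin := F.isLeast_min' hF
  have hcomp := componentWithin_eq_of_mem (mem_filter.1 hmin.1).1
  refine mem_biUnion.2 ⟨F.min' hF, mem_univ _, ?_⟩
  rw [branch, if_pos, hcomp]
  · exact self_mem_componentWithin hv
  · convert hmin using 2
    ext w
    simp [F, hcomp, and_comm]

end Branch

section Counting

variable [Fintype α]

variable (G) in
noncomputable def connectedSetsThrough (j : α) (n : ℕ) : Finset (Finset α) :=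
  {T | j ∈ T ∧ (G.induce (T : Set α)).Connected ∧ #T ≤ n}

variable {T : Finset α} {j : α} {n : ℕ}

lemma mem_connectedSetsThrough :
    T ∈ G.connectedSetsThrough j n ↔ j ∈ T ∧ (G.induce (T : Set α)).Connected ∧ #T ≤ n := by
  simp [connectedSetsThrough]

lemma card_eq_sum_card_branch_add_one [LinearOrder α] (hT : (G.induce (T : Set α)).Connected)
    (hj : j ∈ T) : #T = ∑ u, #(G.branch (T.erase j) j u) + 1 := by
  rw [← card_biUnion (by simpa using pairwiseDisjoint_branch), biUnion_branch_erase hT hj,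
    card_erase_add_one hj]

lemma branch_mem_of_mem_connectedSetsThrough [LinearOrder α]
    (hT : T ∈ G.connectedSetsThrough j (n + 1)) (u : α) :
    G.branch (T.erase j) j u ∈
      if G.Adj j u then insert ∅ (G.connectedSetsThrough u n) else {∅} := by
  obtain ⟨hj, -, hcard⟩ := mem_connectedSetsThrough.1 hT
  rcases branch_eq_empty_or (G := G) (B := T.erase j) (j := j) (u := u) with h | ⟨hju, hu, h⟩
  · rw [h]
    split_ifs
    exacts [mem_insert_self _ _, mem_singleton_self _]
  rw [if_pos hju, h]
  refine mem_insert_of_mem (mem_connectedSetsThrough.2 ⟨self_mem_componentWithin hu,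
    connected_induce_componentWithin hu, ?_⟩)
  have := card_le_card (componentWithin_subset (G := G) (v := u) (s := T.erase j))
  rw [card_erase_of_mem hj] at this
  omega

theorem sum_connectedSetsThrough_succ_le {a : ℝ} (ha : 0 ≤ a) (j : α) (n : ℕ) :
    ∑ T ∈ G.connectedSetsThrough j (n + 1), a ^ #T ≤
      a * ∏ u ∈ G.neighborFinset j, (1 + ∑ C ∈ G.connectedSetsThrough u n, a ^ #C) := by
  -- any linear order serves to root the branches
  let _ : LinearOrder α := LinearOrder.lift' _ (Fintype.equivFin α).injective
  set A := G.connectedSetsThrough j (n + 1)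
  set branches : Finset α → α → Finset α := fun T => G.branch (T.erase j) j
  set options : α → Finset (Finset α) := fun u =>
    if G.Adj j u then insert ∅ (G.connectedSetsThrough u n) else {∅}
  have hpow : ∀ T ∈ A, a ^ #T = a * ∏ u, a ^ #(branches T u) := fun T hT => by
    obtain ⟨hj, hconn, -⟩ := mem_connectedSetsThrough.1 hT
    rw [card_eq_sum_card_branch_add_one hconn hj, pow_succ, prod_pow_eq_pow_sum, mul_comm]
  have hinj : Set.InjOn branches A := fun T₁ hT₁ T₂ hT₂ heq => by
    obtain ⟨hj₁, hconn₁, -⟩ := mem_connectedSetsThrough.1 hT₁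
    obtain ⟨hj₂, hconn₂, -⟩ := mem_connectedSetsThrough.1 hT₂
    rw [← insert_erase hj₁, ← insert_erase hj₂, ← biUnion_branch_erase hconn₁ hj₁,
      ← biUnion_branch_erase hconn₂ hj₂]
    exact congrArg (fun f => insert j (univ.biUnion f)) heq
  have hsum : ∀ u, ∑ C ∈ options u, a ^ #C =
      if G.Adj j u then 1 + ∑ C ∈ G.connectedSetsThrough u n, a ^ #C else 1 := fun u => by
    have hempty : ∅ ∉ G.connectedSetsThrough u n := fun h =>
      (notMem_empty u) (mem_connectedSetsThrough.1 h).1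
    simp only [options]
    split_ifs
    · rw [sum_insert hempty, card_empty, pow_zero]
    · rw [sum_singleton, card_empty, pow_zero]
  calc ∑ T ∈ A, a ^ #T = ∑ g ∈ A.image branches, a * ∏ u, a ^ #(g u) := by
        rw [sum_image hinj]
        exact sum_congr rfl hpow
    _ ≤ ∑ g ∈ Fintype.piFinset options, a * ∏ u, a ^ #(g u) := by
        refine sum_le_sum_of_subset_of_nonneg (image_subset_iff.2 fun T hT => ?_)
          fun _ _ _ => by positivity
        exact Fintype.mem_piFinset.2 (branch_mem_of_mem_connectedSetsThrough hT)
    _ = a * ∏ u ∈ G.neighborFinset j, (1 + ∑ C ∈ G.connectedSetsThrough u n, a ^ #C) := by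
        rw [← mul_sum, ← prod_univ_sum options fun _ C => a ^ #C, neighborFinset_eq_filter,
          prod_filter]
        simp only [hsum]

theorem sum_connectedSetsThrough_le {a c : ℝ} {Δ : ℕ} (ha : 0 ≤ a) (hc : 0 ≤ c)
    (hdeg : ∀ j, G.degree j ≤ Δ) (hac : a * (1 + c) ^ Δ ≤ c) (n : ℕ) (j : α) :
    ∑ T ∈ G.connectedSetsThrough j n, a ^ #T ≤ c := by
  induction n generalizing j with
  | zero =>
    refine (sum_eq_zero fun T hT => ?_).trans_le hc
    obtain ⟨hj, -, hT⟩ := mem_connectedSetsThrough.1 hT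
    exact absurd (card_pos.2 ⟨j, hj⟩) hT.not_gt
  | succ n ih =>
    calc ∑ T ∈ G.connectedSetsThrough j (n + 1), a ^ #T
        ≤ a * ∏ u ∈ G.neighborFinset j, (1 + ∑ C ∈ G.connectedSetsThrough u n, a ^ #C) :=
          sum_connectedSetsThrough_succ_le ha j n
      _ ≤ a * (1 + c) ^ G.degree j := by
          rw [← card_neighborFinset_eq_degree, ← prod_const]
          gcongr with u
          exact ih u
      _ ≤ a * (1 + c) ^ Δ := by
          gcongr
          exacts [by linarith, hdeg j]
      _ ≤ c := hac

theorem sum_pow_card_connected_meeting_le {a c : ℝ} {Δ : ℕ} (ha : 0 ≤ a) (hc : 0 ≤ c)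
    (hdeg : ∀ j, G.degree j ≤ Δ) (hac : a * (1 + c) ^ Δ ≤ c) (J : Finset α) :
    ∑ T ∈ univ.filter (fun T : Finset α => (∃ j ∈ T, j ∈ J) ∧ (G.induce (T : Set α)).Connected),
      a ^ #T ≤ #J * c := by
  calc _ ≤ ∑ j ∈ J, ∑ T ∈ G.connectedSetsThrough j (Fintype.card α), a ^ #T := by
        refine sum_le_sum_sum_of_subset_biUnion (fun T => pow_nonneg ha #T) fun T hT => ?_
        obtain ⟨⟨j, hjT, hjJ⟩, hconn⟩ := (mem_filter.1 hT).2
        exact mem_biUnion.2 ⟨j, hjJ, mem_connectedSetsThrough.2 ⟨hjT, hconn, card_le_univ T⟩⟩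
    _ ≤ ∑ _j ∈ J, c := sum_le_sum fun j _ => G.sum_connectedSetsThrough_le ha hc hdeg hac _ j
    _ = #J * c := by rw [sum_const, nsmul_eq_mul]

end Counting

theorem degree_le_of_adj_imp_inter_nonempty {ι V : Type*} [Fintype ι] [DecidableEq V]
    {G : SimpleGraph ι} {S : ι → Finset V} {k d : ℕ}
    (hG : ∀ i j, G.Adj i j → (S i ∩ S j).Nonempty) (hcard : ∀ j, #(S j) ≤ k)
    (hdeg : ∀ v, #{j | v ∈ S j} ≤ d) (i : ι) :
    G.degree i ≤ k * d := by
  have hsub : G.neighborFinset i ⊆ (S i).biUnion fun v => {j | v ∈ S j} := fun j hj => by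
    obtain ⟨v, hv⟩ := hG i j ((G.mem_neighborFinset i j).1 hj)
    exact mem_biUnion.2 ⟨v, (mem_inter.1 hv).1, mem_filter.2 ⟨mem_univ _, (mem_inter.1 hv).2⟩⟩
  calc G.degree i ≤ #(S i) * d :=
        (card_le_card hsub).trans (card_biUnion_le_card_mul _ _ _ fun v _ => hdeg v)
    _ ≤ k * d := Nat.mul_le_mul_right d (hcard i)

end SimpleGraph

theorem bounds_of_lt_cluster_threshold {d k : ℕ} {h r : ℝ} (hr0 : 0 ≤ r)
    (hr : r < 1 / (5 * Real.exp 1 * d * k * h)) :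
    0 < h ∧ 1 ≤ k * d ∧ 5 * Real.exp 1 * ((k * d : ℕ) * (r * h)) < 1 := by
  have hden : 0 < 5 * Real.exp 1 * d * k * h := one_div_pos.1 (hr0.trans_lt hr)
  refine ⟨pos_of_mul_pos_right hden (by positivity), Nat.one_le_iff_ne_zero.2 fun h0 => ?_, ?_⟩
  · rcases Nat.mul_eq_zero.1 h0 with h0 | h0 <;> simp [h0] at hden
  · have := (lt_div_iff₀ hden).1 hr
    push_cast
    linarith

open Real in
theorem cluster_recursion_le {x : ℝ} {N : ℕ} (hx : 0 ≤ x) (hN : 1 ≤ N)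
    (hNx : 5 * exp 1 * (N * x) < 1) :
    (exp x - 1) * exp (exp 1 ^ 2 * (N * x)) * (1 + exp 1 * (exp 1 - 1) * x) ^ N ≤
      exp 1 * (exp 1 - 1) * x := by
  have he₁ := exp_one_gt_d9
  have he₂ := exp_one_lt_d9
  have hc : 0 ≤ exp 1 * (exp 1 - 1) * x := mul_nonneg (by nlinarith) hx
  have hx_le : x ≤ N * x := le_mul_of_one_le_left hx (by exact_mod_cast hN)
  -- `2e² - 6e + 1 < 0` keeps the total exponent below `5e · N x < 1`.
  have hexponent : x + exp 1 ^ 2 * (N * x) + N * (exp 1 * (exp 1 - 1) * x) ≤ 1 := by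
    nlinarith [mul_nonneg hx (Nat.cast_nonneg N : (0 : ℝ) ≤ N)]
  have hexp_sub_one : 0 ≤ exp x - 1 := sub_nonneg.2 (one_le_exp hx)
  calc (exp x - 1) * exp (exp 1 ^ 2 * (N * x)) * (1 + exp 1 * (exp 1 - 1) * x) ^ N
      ≤ x * exp x * exp (exp 1 ^ 2 * (N * x)) * exp (N * (exp 1 * (exp 1 - 1) * x)) := by
        gcongr
        · exact exp_sub_one_le_mul_exp x
        · exact one_add_pow_le_exp_mul (by linarith) N
    _ = x * exp (x + exp 1 ^ 2 * (N * x) + N * (exp 1 * (exp 1 - 1) * x)) := by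
        rw [exp_add, exp_add]
        ring
    _ ≤ x * exp 1 := by gcongr
    _ ≤ exp 1 * (exp 1 - 1) * x := by nlinarith [mul_nonneg hx (exp_pos 1).le]

theorem cluster_expansion_sum_bound_general
    {V : Type*} [DecidableEq V]
    (m k d : ℕ)
    (S : Fin m → Finset V)
    (hcard : ∀ j, (S j).card ≤ k)
    (hdeg : ∀ v : V, (Finset.univ.filter fun j => v ∈ S j).card ≤ d)
    (G : SimpleGraph (Fin m))
    (hG : ∀ j j', G.Adj j j' ↔ j ≠ j' ∧ (S j ∩ S j').Nonempty)
    (x : V) (h : ℝ)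
    (β₀ : ℝ) (hβ₀ : β₀ = 1 / (5 * Real.exp 1 * d * k * h))
    (r : ℝ) (hr0 : 0 ≤ r) (hr : r < β₀) :
    ∑ T ∈ (Finset.univ : Finset (Fin m)).powerset,
        (if T.Nonempty ∧ (∃ j ∈ T, x ∈ S j) ∧ (G.induce (T : Set (Fin m))).Connected then
          (Real.exp (r * h) - 1) ^ T.card *
            Real.exp (d * h * (Real.exp 1) ^ 2 * r * (T.biUnion S).card)
        else 0) ≤
      Real.exp 1 * (Real.exp 1 - 1) * d * h * r := by
  obtain ⟨hh, hkd, hsmall⟩ := bounds_of_lt_cluster_threshold hr0 (hβ₀ ▸ hr)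
  set a := (Real.exp (r * h) - 1) * Real.exp (Real.exp 1 ^ 2 * ((k * d : ℕ) * (r * h)))
  have hexp : 0 ≤ Real.exp (r * h) - 1 := sub_nonneg.2 (Real.one_le_exp (by positivity))
  have ha : 0 ≤ a := mul_nonneg hexp (Real.exp_pos _).le
  have hc : 0 ≤ Real.exp 1 * (Real.exp 1 - 1) * (r * h) := by
    have := Real.one_le_exp zero_le_one
    positivity
  have hweight (T : Finset (Fin m)) :
      (Real.exp (r * h) - 1) ^ #T * Real.exp (d * h * Real.exp 1 ^ 2 * r * #(T.biUnion S)) ≤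
        a ^ #T := by
    rw [mul_pow]
    gcongr
    refine (Real.exp_mul_card_biUnion_le (by positivity) hcard T).trans_eq ?_
    congr 2
    push_cast
    ring
  have hclusters := G.sum_pow_card_connected_meeting_le ha hc
    (SimpleGraph.degree_le_of_adj_imp_inter_nonempty (fun i j hij => ((hG i j).1 hij).2) hcard hdeg)
    (cluster_recursion_le (by positivity) hkd hsmall) {j | x ∈ S j}
  rw [← sum_filter]
  calc _ ≤ ∑ T ∈ _, a ^ #T := sum_le_sum fun T _ => hweight T
    _ ≤ _ := sum_le_sum_of_subset_of_nonneg (fun T hT => by simp_all) fun T _ _ => pow_nonneg ha _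
    _ ≤ _ := hclusters
    _ ≤ d * (Real.exp 1 * (Real.exp 1 - 1) * (r * h)) := by
        gcongr
        exact_mod_cast hdeg x
    _ = _ := by ring

/-- **The key cluster-expansion estimate (Lemma 27 of Harrow–Mehraban–Soleimanifar).**
For sets `S_1,…,S_m ⊆ V` of size at most `k` with each site in at most `d` of them, the
dependency graph `G` on `[m]` (edges between intersecting sets), a fixed site `x` and
`β₀ = 1/(5edkh)`: for every `0 ≤ r < β₀`,
`Σ_T (e^{rh}−1)^{|T|} exp(d·h·e²·r·|R_T|) ≤ e(e−1)·d·h·r`, the sum over nonempty `T ⊆ [m]`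
with `G[T]` connected and `x ∈ S_j` for some `j ∈ T`, where `R_T = ∪_{j∈T} S_j`. -/
theorem cluster_expansion_sum_bound
    {V : Type*} [Fintype V] [DecidableEq V]
    (m k d : ℕ) (hk : 1 ≤ k) (hd : 1 ≤ d)
    (S : Fin m → Finset V)
    (hSne : ∀ j, (S j).Nonempty)
    (hcard : ∀ j, (S j).card ≤ k)
    (hdeg : ∀ v : V, (Finset.univ.filter fun j => v ∈ S j).card ≤ d)
    (G : SimpleGraph (Fin m))
    (hG : ∀ j j', G.Adj j j' ↔ j ≠ j' ∧ (S j ∩ S j').Nonempty)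
    (x : V) (h : ℝ) (hh : 0 < h)
    (β₀ : ℝ) (hβ₀ : β₀ = 1 / (5 * Real.exp 1 * d * k * h))
    (r : ℝ) (hr0 : 0 ≤ r) (hr : r < β₀) :
    ∑ T ∈ (Finset.univ : Finset (Fin m)).powerset,
        (if T.Nonempty ∧ (∃ j ∈ T, x ∈ S j) ∧ (G.induce (T : Set (Fin m))).Connected then
          (Real.exp (r * h) - 1) ^ T.card *
            Real.exp (d * h * (Real.exp 1) ^ 2 * r * (T.biUnion S).card)
        else 0) ≤
      Real.exp 1 * (Real.exp 1 - 1) * d * h * r :=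
  cluster_expansion_sum_bound_general m k d S hcard hdeg G hG x h β₀ hβ₀ r hr0 hr
end
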